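/- The Jaccard distance d(A, B) = 1 - |A ∩ B| / |A ∪ B| (with d(∅, ∅) = 0) satisfies the triangle inequality: for all finite sets A, B, C, d(A, C) ≤ d(A, B) + d(B, C). -/
import Mathlib

open scoped symmDiff

noncomputable def jaccardDist {α : Type*} [DecidableEq α] (A B : Finset α) : ℝ :=
  if (A ∪ B).Nonempty then 1 - ((A ∩ B).card : ℝ) / ((A ∪ B).card : ℝ) else 0

lemma card_symmDiff_add_inter {α : Type*} [DecidableEq α] (A B : Finset α) :
    (A ∆ B).card + (A ∩ B).card = (A ∪ B).card := by
  rw [symmDiff_eq_sup_sdiff_inf, Finset.sup_eq_union, Finset.inf_eq_inter,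
      Finset.card_sdiff_of_subset Finset.inter_subset_union]
  have := Finset.card_le_card (Finset.inter_subset_union (s := A) (t := B))
  omega

lemma jaccard_nonneg {α : Type*} [DecidableEq α] (A B : Finset α) :
    0 ≤ jaccardDist A B := by
  unfold jaccardDist
  split
  · rename_i h
    have hpos : (0:ℝ) < (A ∪ B).card := by
      exact_mod_cast Finset.card_pos.mpr h
    have hle : ((A ∩ B).card : ℝ) ≤ ((A ∪ B).card : ℝ) := by
      exact_mod_cast Finset.card_le_card (Finset.inter_subset_union)
    have := div_le_one_of_le₀ hle hpos.le
    linarith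
  · exact le_refl 0

lemma jaccard_eq {α : Type*} [DecidableEq α] (A B : Finset α) (h : (A ∪ B).Nonempty) :
    jaccardDist A B = ((A ∆ B).card : ℝ) / ((A ∪ B).card : ℝ) := by
  have hcard := card_symmDiff_add_inter A B
  have hpos : (0:ℝ) < (A ∪ B).card := by
    exact_mod_cast Finset.card_pos.mpr h
  unfold jaccardDist
  rw [if_pos h]
  field_simp
  push_cast [← hcard]
  ring

theorem stmt_9 {α : Type*} [DecidableEq α] (A B C : Finset α) :
    jaccardDist A C ≤ jaccardDist A B + jaccardDist B C := by
  by_cases hAC : (A ∪ C).Nonempty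
  · by_cases hAB : (A ∪ B).Nonempty
    · by_cases hBC : (B ∪ C).Nonempty
      · -- main case: nat-level facts first
        have htriN : (A ∆ C).card ≤ (A ∆ B).card + (B ∆ C).card := by
          have hsub : A ∆ C ⊆ (A ∆ B) ∪ (B ∆ C) := symmDiff_triangle A B C
          exact (Finset.card_le_card hsub).trans (Finset.card_union_le _ _)
        have hABN : (A ∪ B).card ≤ (A ∆ B).card + (B ∆ C).card + (A ∩ C).card := by
          have hsub : A ∩ B ⊆ (B ∆ C) ∪ (A ∩ C) := by
            intro x hx
            simp only [Finset.mem_inter] at hx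
            by_cases hxC : x ∈ C
            · exact Finset.mem_union_right _ (Finset.mem_inter.mpr ⟨hx.1, hxC⟩)
            · refine Finset.mem_union_left _ ?_
              rw [Finset.mem_symmDiff]
              exact Or.inl ⟨hx.2, hxC⟩
          have h1 : (A ∩ B).card ≤ (B ∆ C).card + (A ∩ C).card :=
            (Finset.card_le_card hsub).trans (Finset.card_union_le _ _)
          have h2 := card_symmDiff_add_inter A B
          omega
        have hBCN : (B ∪ C).card ≤ (A ∆ B).card + (B ∆ C).card + (A ∩ C).card := by
          have hsub : B ∩ C ⊆ (A ∆ B) ∪ (A ∩ C) := by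
            intro x hx
            simp only [Finset.mem_inter] at hx
            by_cases hxA : x ∈ A
            · exact Finset.mem_union_right _ (Finset.mem_inter.mpr ⟨hxA, hx.2⟩)
            · refine Finset.mem_union_left _ ?_
              rw [Finset.mem_symmDiff]
              exact Or.inr ⟨hx.1, hxA⟩
          have h1 : (B ∩ C).card ≤ (A ∆ B).card + (A ∩ C).card :=
            (Finset.card_le_card hsub).trans (Finset.card_union_le _ _)
          have h2 := card_symmDiff_add_inter B C
          omega
        have hACN := card_symmDiff_add_inter A C
        -- now pass to reals
        have hp0 : (0:ℝ) ≤ ((A ∆ B).card : ℝ) := Nat.cast_nonneg _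
        have hq0 : (0:ℝ) ≤ ((B ∆ C).card : ℝ) := Nat.cast_nonneg _
        have huABpos : (0:ℝ) < ((A ∪ B).card : ℝ) := by
          exact_mod_cast Finset.card_pos.mpr hAB
        have huBCpos : (0:ℝ) < ((B ∪ C).card : ℝ) := by
          exact_mod_cast Finset.card_pos.mpr hBC
        have huACpos : (0:ℝ) < ((A ∪ C).card : ℝ) := by
          exact_mod_cast Finset.card_pos.mpr hAC
        have htri : ((A ∆ C).card : ℝ) ≤ ((A ∆ B).card : ℝ) + ((B ∆ C).card : ℝ) := by
          exact_mod_cast htriN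
        have hAB_le : ((A ∪ B).card : ℝ) ≤ ((A ∆ B).card : ℝ) + ((B ∆ C).card : ℝ) + ((A ∩ C).card : ℝ) := by
          exact_mod_cast hABN
        have hBC_le : ((B ∪ C).card : ℝ) ≤ ((A ∆ B).card : ℝ) + ((B ∆ C).card : ℝ) + ((A ∩ C).card : ℝ) := by
          exact_mod_cast hBCN
        have hACr : ((A ∪ C).card : ℝ) = ((A ∆ C).card : ℝ) + ((A ∩ C).card : ℝ) := by
          exact_mod_cast hACN.symm
        set p := ((A ∆ B).card : ℝ)
        set q := ((B ∆ C).card : ℝ)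
        set r := ((A ∆ C).card : ℝ)
        set i := ((A ∩ C).card : ℝ)
        have hi0 : (0:ℝ) ≤ i := Nat.cast_nonneg _
        have hr0 : (0:ℝ) ≤ r := Nat.cast_nonneg _
        have hripos : (0:ℝ) < r + i := hACr ▸ huACpos
        have hpqi : (0:ℝ) < p + q + i := lt_of_lt_of_le huABpos hAB_le
        rw [jaccard_eq A C hAC, jaccard_eq A B hAB, jaccard_eq B C hBC, hACr]
        have h1 : r / (r + i) ≤ (p + q) / (p + q + i) := by
          rw [div_le_div_iff₀ hripos hpqi]
          nlinarith
        have h2 : p / (p + q + i) ≤ p / ((A ∪ B).card : ℝ) :=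
          div_le_div_of_nonneg_left hp0 huABpos hAB_le
        have h3 : q / (p + q + i) ≤ q / ((B ∪ C).card : ℝ) :=
          div_le_div_of_nonneg_left hq0 huBCpos hBC_le
        calc r / (r + i) ≤ (p + q) / (p + q + i) := h1
          _ = p / (p + q + i) + q / (p + q + i) := by ring
          _ ≤ p / ((A ∪ B).card : ℝ) + q / ((B ∪ C).card : ℝ) := add_le_add h2 h3
      · rw [Finset.not_nonempty_iff_eq_empty, Finset.union_eq_empty] at hBC
        obtain ⟨hB, hC⟩ := hBC
        subst hB; subst hC
        simp [jaccardDist]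
    · rw [Finset.not_nonempty_iff_eq_empty, Finset.union_eq_empty] at hAB
      obtain ⟨hA, hB⟩ := hAB
      subst hA; subst hB
      simp [jaccardDist]
  · have h0 : jaccardDist A C = 0 := by unfold jaccardDist; rw [if_neg hAC]
    rw [h0]
    exact add_nonneg (jaccard_nonneg A B) (jaccard_nonneg B C)
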